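/- The subgroup R_n of B_n generated by d together with r_1, …, r_n coincides with the subgroup generated by d together with r_1, …, r_{n−1}; in particular r_n lies in the subgroup generated by d and r_1, …, r_{n−1}, and d^2 lies in the subgroup R_n' generated by r_1, …, r_n. -/

import Mathlib

namespace Braid

/-- Braid relations on generators indexed by `Fin m`; the generator `i : Fin m` stands for the
Artin generator `σ_{i+1}` of the braid group on `m+1` strands: the relations are
`σ_i σ_j = σ_j σ_i` for `|i-j| ≥ 2` and `σ_i σ_{i+1} σ_i = σ_{i+1} σ_i σ_{i+1}`. -/
def braidRels (m : ℕ) : Set (FreeGroup (Fin m)) :=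
  {r | ∃ i j : Fin m, i.val + 2 ≤ j.val ∧
      r = .of i * .of j * (.of j * .of i)⁻¹} ∪
  {r | ∃ (i : Fin m) (hij : i.val + 1 < m),
      r = .of i * .of ⟨i.val + 1, hij⟩ * .of i *
        (.of ⟨i.val + 1, hij⟩ * .of i * .of ⟨i.val + 1, hij⟩)⁻¹}

/-- The Artin braid group `B_n` on `n` strands, presented with generators `σ_1, …, σ_{n-1}`
and the braid relations. -/
def BraidGroup (n : ℕ) : Type := PresentedGroup (braidRels (n - 1))

instance (n : ℕ) : Group (BraidGroup n) := by unfold BraidGroup; infer_instance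

/-- The Artin generator `σ_i` of `B_n`, for `1 ≤ i ≤ n-1` (junk value `1` otherwise). -/
def σ (n : ℕ) (i : ℕ) : BraidGroup n :=
  if h : 1 ≤ i ∧ i ≤ n - 1 then PresentedGroup.of ⟨i - 1, by omega⟩ else 1

/-- The ascending product `σ_a σ_{a+1} ⋯ σ_b` (empty product if `b < a`). -/
def up (n a b : ℕ) : BraidGroup n := ((List.range' a (b + 1 - a)).map (σ n)).prod

/-- The descending product `σ_a σ_{a-1} ⋯ σ_b` (empty product if `a < b`). -/
def down (n a b : ℕ) : BraidGroup n :=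
  ((List.range' b (a + 1 - b)).reverse.map (σ n)).prod

/-- The full twist `d = (σ_{n-1} ⋯ σ_2 σ_1)^n` of `B_n`. -/
def fullTwist (n : ℕ) : BraidGroup n := (down n (n - 1) 1) ^ n

/-- The flip `r_i = σ_{i-1} ⋯ σ_2 σ_1^2 σ_2 ⋯ σ_{n-2} σ_{n-1}^2 σ_{n-2} ⋯ σ_i` of `B_n`
(for `1 ≤ i ≤ n`), written as `(σ_{i-1} ⋯ σ_1) (σ_1 ⋯ σ_{n-1}) (σ_{n-1} ⋯ σ_i)`. -/
def flip (n i : ℕ) : BraidGroup n :=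
  down n (i - 1) 1 * up n 1 (n - 1) * down n (n - 1) i

/-- The descending product of flips `r_a r_{a-1} ⋯ r_b` (empty product if `a < b`). -/
def flipsDown (n a b : ℕ) : BraidGroup n :=
  ((List.range' b (a + 1 - b)).reverse.map (flip n)).prod

/-- The subgroup `R_n ⊆ B_n` generated by the full twist `d` and the flips `r_1, …, r_n`. -/
def R (n : ℕ) : Subgroup (BraidGroup n) :=
  Subgroup.closure ({fullTwist n} ∪ flip n '' Set.Icc 1 n)

/-- The subgroup `R_n' ⊆ B_n` generated by the flips `r_1, …, r_n`. -/
def R' (n : ℕ) : Subgroup (BraidGroup n) :=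
  Subgroup.closure (flip n '' Set.Icc 1 n)

private lemma swap_braid {n : ℕ} (a b c : Fin n) (hab : a ≠ b) (hbc : b ≠ c) (hac : a ≠ c) :
    Equiv.swap a b * Equiv.swap b c * Equiv.swap a b
      = Equiv.swap b c * Equiv.swap a b * Equiv.swap b c := by
  have h1 : Equiv.swap b a * Equiv.swap c b * Equiv.swap b a = Equiv.swap a c :=
    Equiv.swap_mul_swap_mul_swap (Ne.symm hbc) hac.symm
  have h2 : Equiv.swap b c * Equiv.swap a b * Equiv.swap b c = Equiv.swap c a :=
    Equiv.swap_mul_swap_mul_swap hab hac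
  rw [h2, Equiv.swap_comm a b, Equiv.swap_comm b c, h1, Equiv.swap_comm a c]

private lemma swap_commute {n : ℕ} (a b c d : Fin n)
    (hac : a ≠ c) (had : a ≠ d) (hbc : b ≠ c) (hbd : b ≠ d) :
    Equiv.swap a b * Equiv.swap c d = Equiv.swap c d * Equiv.swap a b := by
  refine Equiv.Perm.Disjoint.commute ?_
  intro x
  by_cases h1 : x = a
  · subst h1; right; exact Equiv.swap_apply_of_ne_of_ne hac had
  · by_cases h2 : x = b
    · subst h2; right; exact Equiv.swap_apply_of_ne_of_ne hbc hbd
    · left; exact Equiv.swap_apply_of_ne_of_ne h1 h2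

/-- The transposition `(i, i+1)` of `Fin n` associated to the generator `i : Fin (n-1)`. -/
def permGen (n : ℕ) (i : Fin (n - 1)) : Equiv.Perm (Fin n) :=
  Equiv.swap ⟨i.val, by have := i.isLt; omega⟩ ⟨i.val + 1, by have := i.isLt; omega⟩

/-- The homomorphism `B_n → Sym(n)` sending `σ_i` to the transposition `(i, i+1)`. -/
def toPerm (n : ℕ) : BraidGroup n →* Equiv.Perm (Fin n) :=
  PresentedGroup.toGroup (f := permGen n)
    (by
      rintro r (⟨i, j, hij, rfl⟩ | ⟨i, hij, rfl⟩) <;>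
        simp only [map_mul, map_inv, FreeGroup.lift_apply_of, permGen] <;> rw [mul_inv_eq_one]
      · refine swap_commute _ _ _ _ ?_ ?_ ?_ ?_ <;>
          · rw [ne_eq, Fin.mk.injEq]; omega
      · refine swap_braid _ _ _ ?_ ?_ ?_ <;>
          · rw [ne_eq, Fin.mk.injEq]; omega)

/-- The pure braid group `P_n`: the kernel of `B_n → Sym(n)`, `σ_i ↦ (i, i+1)`. -/
def P (n : ℕ) : Subgroup (BraidGroup n) := (toPerm n).ker

private lemma mk_rel_eq_one {m : ℕ} {r : FreeGroup (Fin m)} (h : r ∈ braidRels m) :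
    PresentedGroup.mk (braidRels m) r = 1 :=
  (QuotientGroup.eq_one_iff _).mpr (Subgroup.subset_normalClosure h)

lemma σ_comm {n i j : ℕ} (h1 : 1 ≤ i) (h2 : i + 2 ≤ j) (h3 : j ≤ n - 1) :
    σ n i * σ n j = σ n j * σ n i := by
  have e1 : σ n i = (PresentedGroup.of (rels := braidRels (n - 1)) ⟨i - 1, by omega⟩ :
      PresentedGroup (braidRels (n - 1))) := dif_pos ⟨h1, by omega⟩
  have e2 : σ n j = (PresentedGroup.of (rels := braidRels (n - 1)) ⟨j - 1, by omega⟩ :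
      PresentedGroup (braidRels (n - 1))) := dif_pos ⟨by omega, h3⟩
  rw [e1, e2]
  have hmem : (FreeGroup.of (⟨i - 1, by omega⟩ : Fin (n-1)) * .of ⟨j - 1, by omega⟩ *
      (.of ⟨j - 1, by omega⟩ * .of ⟨i - 1, by omega⟩)⁻¹) ∈ braidRels (n - 1) :=
    Or.inl ⟨⟨i - 1, by omega⟩, ⟨j - 1, by omega⟩, by show i - 1 + 2 ≤ j - 1; omega, rfl⟩
  have h := mk_rel_eq_one hmem
  rw [map_mul, map_inv, mul_inv_eq_one, map_mul, map_mul] at h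
  exact h

set_option maxHeartbeats 1600000 in
lemma σ_braid {n i : ℕ} (h1 : 1 ≤ i) (h2 : i + 1 ≤ n - 1) :
    σ n i * σ n (i + 1) * σ n i = σ n (i + 1) * σ n i * σ n (i + 1) := by
  have e1 : σ n i = (PresentedGroup.of (rels := braidRels (n - 1)) ⟨i - 1, by omega⟩ :
      PresentedGroup (braidRels (n - 1))) := dif_pos ⟨h1, by omega⟩
  have e2 : σ n (i + 1) = (PresentedGroup.of (rels := braidRels (n - 1))
      ⟨i + 1 - 1, by omega⟩ : PresentedGroup (braidRels (n - 1))) := dif_pos ⟨by omega, h2⟩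
  rw [e1, e2]
  have key : (⟨i + 1 - 1, by omega⟩ : Fin (n - 1)) = ⟨(i - 1) + 1, by omega⟩ := by
    rw [Fin.mk.injEq]; omega
  rw [key]
  have hmem : (FreeGroup.of (⟨i - 1, by omega⟩ : Fin (n-1)) * .of ⟨(i-1) + 1, by omega⟩ *
      .of ⟨i - 1, by omega⟩ *
      (.of ⟨(i-1) + 1, by omega⟩ * .of ⟨i - 1, by omega⟩ * .of ⟨(i-1)+1, by omega⟩)⁻¹)
      ∈ braidRels (n - 1) :=
    Or.inr ⟨⟨i - 1, by omega⟩, by show i - 1 + 1 < n - 1; omega, rfl⟩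
  have h := mk_rel_eq_one hmem
  rw [map_mul, map_inv, mul_inv_eq_one, map_mul, map_mul, map_mul, map_mul] at h
  exact h

/-- The canonical homomorphism `ι : B_{n-1} → B_n` determined by `σ_i ↦ σ_i`. -/
def ι (n : ℕ) : BraidGroup (n - 1) →* BraidGroup n :=
  PresentedGroup.toGroup (f := fun i : Fin (n - 1 - 1) => σ n (i.val + 1))
    (by
      rintro r (⟨i, j, hij, rfl⟩ | ⟨i, hij, rfl⟩) <;>
        simp only [map_mul, map_inv, FreeGroup.lift_apply_of] <;> rw [mul_inv_eq_one]
      · exact σ_comm (by omega) (by omega) (by have := j.isLt; omega)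
      · exact σ_braid (by omega) (by have := i.isLt; omega))

/-!
Write `u = σ_1 ⋯ σ_{n-1}` and `c = σ_{n-1} ⋯ σ_1`, so that `d = c^n` and `r_1 = u c`.
Conjugation by `u` sends `σ_i` to `σ_{i+1}` (for `i < n-1`), hence `r_i` to `r_{i+1}`, and
therefore `r_k ⋯ r_1 = u^k c^k`. The Garside identity `u^n = c^n` holds by induction on the
number of strands: `u^n = u'^{n-1} (c u)` with `u'` the ascending product on the first `n-1`
strands, `c u` commutes with every braid on those strands, and the mirror formula
`c^n = (c u) c'^{n-1}` comes from the anti-automorphism of `B_n` fixing each `σ_i`.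
So `d^2 = u^n c^n = r_n ⋯ r_1` lies in `R_n'`, and `r_n = d^2 (r_{n-1} ⋯ r_1)⁻¹`.
-/

lemma semiconjBy_list_prod {M : Type*} [Monoid M] {x : M} {l₁ l₂ : List M}
    (h : List.Forall₂ (SemiconjBy x) l₁ l₂) : SemiconjBy x l₁.prod l₂.prod := by
  induction h with
  | nil => exact SemiconjBy.one_right x
  | cons hab _ ih => simpa only [List.prod_cons] using hab.mul_right ih

section

variable {n : ℕ}

lemma σ_eq_one {i : ℕ} (h : ¬(1 ≤ i ∧ i ≤ n - 1)) : σ n i = 1 := dif_neg h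

lemma σ_succ_eq_of (i : Fin (n - 1)) : σ n (i + 1) = PresentedGroup.of i :=
  dif_pos ⟨by omega, by omega⟩

lemma σ_commute {i j : ℕ} (h : i + 2 ≤ j) : Commute (σ n i) (σ n j) := by
  by_cases hi : 1 ≤ i ∧ i ≤ n - 1
  · by_cases hj : 1 ≤ j ∧ j ≤ n - 1
    · exact σ_comm hi.1 h hj.2
    · rw [σ_eq_one hj]; exact Commute.one_right _
  · rw [σ_eq_one hi]; exact Commute.one_left _

lemma up_eq_one {a b : ℕ} (h : b < a) : up n a b = 1 := by
  rw [up, show b + 1 - a = 0 by omega]; rfl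

lemma down_eq_one {a b : ℕ} (h : a < b) : down n a b = 1 := by
  rw [down, show a + 1 - b = 0 by omega]; rfl

lemma up_cons {a b : ℕ} (h : a ≤ b) : up n a b = σ n a * up n (a + 1) b := by
  rw [up, up, show b + 1 - a = b + 1 - (a + 1) + 1 by omega, List.range'_succ]
  simp

lemma up_concat {a b : ℕ} (h : a ≤ b + 1) : up n a (b + 1) = up n a b * σ n (b + 1) := by
  rw [up, up, show b + 1 + 1 - a = b + 1 - a + 1 by omega, List.range'_concat]
  simp [show a + (b + 1 - a) = b + 1 by omega]

lemma down_cons {a b : ℕ} (h : b ≤ a + 1) : down n (a + 1) b = σ n (a + 1) * down n a b := by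
  rw [down, down, show a + 1 + 1 - b = a + 1 - b + 1 by omega, List.range'_concat]
  simp [show b + (a + 1 - b) = a + 1 by omega]

lemma down_concat {a b : ℕ} (h : b ≤ a) : down n a b = down n a (b + 1) * σ n b := by
  rw [down, down, show a + 1 - b = a + 1 - (b + 1) + 1 by omega, List.range'_succ]
  simp

lemma up_append {a b c : ℕ} (h₁ : a ≤ c + 1) (h₂ : c ≤ b) :
    up n a b = up n a c * up n (c + 1) b := by
  rw [up, up, up, show b + 1 - a = (c + 1 - a) + (b + 1 - (c + 1)) by omega,
    ← List.range'_append_1, show a + (c + 1 - a) = c + 1 by omega, List.map_append,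
    List.prod_append]

end

def reverse (n : ℕ) : BraidGroup n →* (BraidGroup n)ᵐᵒᵖ :=
  PresentedGroup.toGroup (f := fun i => MulOpposite.op (PresentedGroup.of i))
    (by
      rintro r (⟨i, j, hij, rfl⟩ | ⟨i, hij, rfl⟩) <;>
        simp only [map_mul, map_inv, FreeGroup.lift_apply_of, mul_inv_eq_one, ← σ_succ_eq_of] <;>
        apply MulOpposite.unop_injective <;>
        simp only [MulOpposite.unop_mul, ← mul_assoc]
      · exact (σ_comm (by omega) (by omega) (by have := j.isLt; omega)).symm
      · exact σ_braid (by omega) (by omega))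

section

variable {n : ℕ}

lemma reverse_σ (i : ℕ) : reverse n (σ n i) = MulOpposite.op (σ n i) := by
  by_cases h : 1 ≤ i ∧ i ≤ n - 1
  · obtain ⟨k, rfl⟩ : ∃ k, i = k + 1 := ⟨i - 1, by omega⟩
    rw [show σ n (k + 1) = _ from σ_succ_eq_of ⟨k, by omega⟩]
    exact PresentedGroup.toGroup.of _
  · rw [σ_eq_one h, map_one, MulOpposite.op_one]

lemma reverse_up (a b : ℕ) : reverse n (up n a b) = MulOpposite.op (down n b a) := by
  simp [up, down, map_list_prod, MulOpposite.op_list_prod, reverse_σ, Function.comp_def]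

lemma reverse_down (a b : ℕ) : reverse n (down n a b) = MulOpposite.op (up n b a) := by
  simp [up, down, map_list_prod, MulOpposite.op_list_prod, reverse_σ, Function.comp_def]

lemma commute_up_of_σ {y : BraidGroup n} {a b : ℕ}
    (h : ∀ i, a ≤ i → i ≤ b → Commute y (σ n i)) : Commute y (up n a b) :=
  Commute.list_prod_right _ _ fun x hx => by
    obtain ⟨i, hi, rfl⟩ := List.mem_map.mp hx
    rw [List.mem_range'_1] at hi
    exact h i hi.1 (by omega)

lemma commute_down_of_σ {y : BraidGroup n} {a b : ℕ}
    (h : ∀ i, b ≤ i → i ≤ a → Commute y (σ n i)) : Commute y (down n a b) :=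
  Commute.list_prod_right _ _ fun x hx => by
    obtain ⟨i, hi, rfl⟩ := List.mem_map.mp hx
    rw [List.mem_reverse, List.mem_range'_1] at hi
    exact h i hi.1 (by omega)

lemma semiconjBy_up_σ {a b i : ℕ} (hi : 1 ≤ i) (hai : a ≤ i) (hib : i < b) (hb : b ≤ n - 1) :
    SemiconjBy (up n a b) (σ n i) (σ n (i + 1)) := by
  set A := up n a (i - 1)
  set Z := up n (i + 2) b
  have hsplit : up n a b = A * σ n i * σ n (i + 1) * Z := by
    rw [up_append (c := i - 1) (by omega) (by omega), Nat.sub_add_cancel hi,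
      up_cons (a := i) (by omega), up_cons (a := i + 1) (by omega)]
    simp only [A, Z, mul_assoc]
  have hA : Commute (σ n (i + 1)) A :=
    commute_up_of_σ fun _ _ hk => (σ_commute (by omega)).symm
  have hZ : Commute (σ n i) Z := commute_up_of_σ fun _ hk _ => σ_commute (by omega)
  calc up n a b * σ n i
      = A * (σ n i * σ n (i + 1) * σ n i) * Z := by
        rw [hsplit]; simp only [mul_assoc, hZ.eq]
    _ = A * (σ n (i + 1) * σ n i * σ n (i + 1)) * Z := by
        rw [σ_braid hi (by omega)]
    _ = σ n (i + 1) * up n a b := by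
        rw [hsplit]; simp only [← mul_assoc, hA.eq]

lemma semiconjBy_down_σ {a b i : ℕ} (hi : 1 ≤ i) (hai : a ≤ i) (hib : i < b) (hb : b ≤ n - 1) :
    SemiconjBy (down n b a) (σ n (i + 1)) (σ n i) := by
  have h := congrArg (reverse n) (semiconjBy_up_σ hi hai hib hb).eq
  simp only [map_mul, reverse_up, reverse_σ] at h
  exact (congrArg MulOpposite.unop h).symm

lemma semiconjBy_up_of_σ {x : BraidGroup n} {a b : ℕ}
    (h : ∀ i, a ≤ i → i ≤ b → SemiconjBy x (σ n i) (σ n (i + 1))) :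
    SemiconjBy x (up n a b) (up n (a + 1) (b + 1)) := by
  rw [up, up, show b + 1 + 1 - (a + 1) = b + 1 - a by omega, List.range'_succ_left,
    List.map_map]
  refine semiconjBy_list_prod ?_
  rw [List.forall₂_map_left_iff, List.forall₂_map_right_iff, List.forall₂_same]
  intro i hi
  rw [List.mem_range'_1] at hi
  exact h i hi.1 (by omega)

lemma semiconjBy_down_of_σ {x : BraidGroup n} {a b : ℕ}
    (h : ∀ i, b ≤ i → i ≤ a → SemiconjBy x (σ n i) (σ n (i + 1))) :
    SemiconjBy x (down n a b) (down n (a + 1) (b + 1)) := by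
  rw [down, down, show a + 1 + 1 - (b + 1) = a + 1 - b by omega, List.range'_succ_left,
    ← List.map_reverse, List.map_map]
  refine semiconjBy_list_prod ?_
  rw [List.forall₂_map_left_iff, List.forall₂_map_right_iff, List.forall₂_same]
  intro i hi
  rw [List.mem_reverse, List.mem_range'_1] at hi
  exact h i hi.1 (by omega)

lemma semiconjBy_up_up {a b c e : ℕ} (ha : 1 ≤ a) (hca : c ≤ a) (hbe : b < e) (he : e ≤ n - 1) :
    SemiconjBy (up n c e) (up n a b) (up n (a + 1) (b + 1)) :=
  semiconjBy_up_of_σ fun _ hi hib => semiconjBy_up_σ (by omega) (by omega) (by omega) he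

lemma semiconjBy_up_down {a b c e : ℕ} (hb : 1 ≤ b) (hcb : c ≤ b) (hae : a < e) (he : e ≤ n - 1) :
    SemiconjBy (up n c e) (down n a b) (down n (a + 1) (b + 1)) :=
  semiconjBy_down_of_σ fun _ hi hia => semiconjBy_up_σ (by omega) (by omega) (by omega) he

lemma down_mul_up_one {m j : ℕ} (hj : 1 ≤ j) (hjm : j ≤ m) (hm : m ≤ n - 1) :
    down n m (j + 1) * up n 1 m = up n 1 (m - 1) * down n m j := by
  obtain ⟨k, rfl⟩ : ∃ k, m = k + 1 := ⟨m - 1, by omega⟩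
  calc down n (k + 1) (j + 1) * up n 1 (k + 1) = up n 1 (k + 1) * down n k j :=
        (semiconjBy_up_down hj hj (by omega) hm).eq.symm
    _ = up n 1 (k + 1 - 1) * down n (k + 1) j := by
        rw [up_concat (by omega), down_cons (by omega), Nat.add_sub_cancel, mul_assoc]

lemma up_one_pow {m k : ℕ} (hkm : k ≤ m) (hm : m ≤ n - 1) :
    up n 1 m ^ k = up n 1 (m - 1) ^ k * down n m (m + 1 - k) := by
  induction k with
  | zero => rw [pow_zero, pow_zero, one_mul, down_eq_one (by omega)]
  | succ k ih =>
    rw [pow_succ, ih (by omega), mul_assoc, show m + 1 - k = m - k + 1 by omega,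
      down_mul_up_one (by omega) (by omega) hm, ← mul_assoc, ← pow_succ,
      show m + 1 - (k + 1) = m - k by omega]

lemma up_one_pow_succ {m : ℕ} (hm : m ≤ n - 1) :
    up n 1 m ^ (m + 1) = up n 1 (m - 1) ^ m * (down n m 1 * up n 1 m) := by
  rw [pow_succ, up_one_pow le_rfl hm, Nat.add_sub_cancel_left, mul_assoc]

lemma down_one_pow_succ {m : ℕ} (hm : m ≤ n - 1) :
    down n m 1 ^ (m + 1) = down n m 1 * up n 1 m * down n (m - 1) 1 ^ m := by
  simpa [reverse_up, reverse_down, mul_assoc] using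
    congrArg MulOpposite.unop (congrArg (reverse n) (up_one_pow_succ hm))

lemma commute_down_mul_up_σ {m i : ℕ} (hi : i < m) (hm : m ≤ n - 1) :
    Commute (down n m 1 * up n 1 m) (σ n i) := by
  rcases Nat.eq_zero_or_pos i with rfl | hi₁
  · rw [σ_eq_one (by omega)]
    exact Commute.one_right _
  · calc down n m 1 * up n 1 m * σ n i = down n m 1 * σ n (i + 1) * up n 1 m := by
          rw [mul_assoc, (semiconjBy_up_σ hi₁ hi₁ hi hm).eq, ← mul_assoc]
      _ = σ n i * (down n m 1 * up n 1 m) := by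
          rw [(semiconjBy_down_σ hi₁ hi₁ hi hm).eq, mul_assoc]

lemma up_one_pow_eq_down_one_pow {m : ℕ} (hm : m ≤ n - 1) :
    up n 1 m ^ (m + 1) = down n m 1 ^ (m + 1) := by
  induction m with
  | zero => rw [up_eq_one (by omega), down_eq_one (by omega)]
  | succ m ih =>
    have hcomm : Commute (down n (m + 1) 1 * up n 1 (m + 1)) (down n m 1 ^ (m + 1)) :=
      (commute_down_of_σ fun _ _ hk => commute_down_mul_up_σ (by omega) hm).pow_right _
    rw [up_one_pow_succ hm, down_one_pow_succ hm, Nat.add_sub_cancel, ih (by omega),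
      hcomm.eq]

lemma flip_one : flip n 1 = up n 1 (n - 1) * down n (n - 1) 1 := by
  rw [flip, down_eq_one (a := 1 - 1) (by omega), one_mul]

lemma semiconjBy_up_flip {i : ℕ} (hi : 1 ≤ i) (hin : i ≤ n - 1) :
    SemiconjBy (up n 1 (n - 1)) (flip n i) (flip n (i + 1)) := by
  obtain ⟨j, rfl⟩ : ∃ j, i = j + 1 := ⟨i - 1, by omega⟩
  have hu : up n 1 (n - 1) = σ n 1 * up n 2 (n - 1) := up_cons (by omega)
  have hU : up n 1 (n - 1) * up n 1 (n - 2) = up n 2 (n - 1) * up n 1 (n - 1) := by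
    have h := (semiconjBy_up_up (n := n) (a := 1) (b := n - 2) (c := 1) (e := n - 1)
      le_rfl le_rfl (by omega) le_rfl).eq
    rwa [show n - 2 + 1 = n - 1 by omega] at h
  have hD : up n 1 (n - 1) * down n j 1 = down n (j + 1) 2 * up n 1 (n - 1) :=
    (semiconjBy_up_down le_rfl le_rfl (by omega) le_rfl).eq
  have hK : down n (n - 1) (j + 2) * up n 1 (n - 1)
      = up n 1 (n - 2) * down n (n - 1) (j + 1) :=
    down_mul_up_one (by omega) (by omega) le_rfl
  have hC : down n (j + 1) 1 = down n (j + 1) 2 * σ n 1 := down_concat (by omega)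
  calc up n 1 (n - 1) * flip n (j + 1)
      = down n (j + 1) 2 * (up n 1 (n - 1) * up n 1 (n - 1)) * down n (n - 1) (j + 1) := by
        rw [flip, Nat.add_sub_cancel, ← mul_assoc, ← mul_assoc, hD]
        simp only [mul_assoc]
    _ = down n (j + 1) 2 * (σ n 1 * (up n 1 (n - 1) * up n 1 (n - 2)))
          * down n (n - 1) (j + 1) := by
        rw [hU, ← mul_assoc (σ n 1), ← hu]
    _ = flip n (j + 1 + 1) * up n 1 (n - 1) := by
        rw [flip, Nat.add_sub_cancel, hC, mul_assoc (_ * _) (down n _ _), hK]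
        simp only [mul_assoc]

lemma semiconjBy_up_pow_flip_one {k : ℕ} (hk : k ≤ n - 1) :
    SemiconjBy (up n 1 (n - 1) ^ k) (flip n 1) (flip n (k + 1)) := by
  induction k with
  | zero => rw [pow_zero]; exact SemiconjBy.one_left _
  | succ k ih =>
    rw [pow_succ']
    exact (semiconjBy_up_flip (by omega) hk).mul_left (ih (by omega))

lemma flipsDown_succ (k : ℕ) : flipsDown n (k + 1) 1 = flip n (k + 1) * flipsDown n k 1 := by
  rw [flipsDown, flipsDown, Nat.add_sub_cancel, List.range'_concat]
  simp [add_comm]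

lemma flipsDown_eq {k : ℕ} (hk : k ≤ n) :
    flipsDown n k 1 = up n 1 (n - 1) ^ k * down n (n - 1) 1 ^ k := by
  induction k with
  | zero => rw [pow_zero, pow_zero, mul_one]; rfl
  | succ k ih =>
    rw [flipsDown_succ, ih (by omega), ← mul_assoc,
      ← (semiconjBy_up_pow_flip_one (n := n) (k := k) (by omega)).eq, flip_one,
      pow_succ, pow_succ']
    simp only [mul_assoc]

lemma flipsDown_mem_closure {k m : ℕ} (hkm : k ≤ m) :
    flipsDown n k 1 ∈ Subgroup.closure (flip n '' Set.Icc 1 m) := by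
  induction k with
  | zero => exact one_mem _
  | succ k ih =>
    rw [flipsDown_succ]
    exact mul_mem (Subgroup.subset_closure ⟨k + 1, ⟨by omega, hkm⟩, rfl⟩) (ih (by omega))

lemma fullTwist_sq : fullTwist n ^ 2 = flipsDown n n 1 := by
  have hd : fullTwist n = up n 1 (n - 1) ^ n := by
    rcases n with _ | m
    · rfl
    · exact (up_one_pow_eq_down_one_pow le_rfl).symm
  rw [sq, flipsDown_eq le_rfl, ← hd]
  rfl

lemma flip_self_mul_flipsDown (hn : 1 ≤ n) :
    flip n n * flipsDown n (n - 1) 1 = fullTwist n ^ 2 := by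
  obtain ⟨m, rfl⟩ : ∃ m, n = m + 1 := ⟨n - 1, by omega⟩
  exact (fullTwist_sq.trans (flipsDown_succ m)).symm

end

/-- The subgroup `R_n` generated by `d` and `r_1, …, r_n` coincides with the subgroup generated
by `d` and `r_1, …, r_{n-1}`; in particular `r_n` lies in the latter subgroup, and `d^2` lies
in the subgroup `R_n'` generated by `r_1, …, r_n`. -/
theorem R_eq_closure_fullTwist_and_first_flips (n : ℕ) (hn : 2 ≤ n) :
    R n = Subgroup.closure ({fullTwist n} ∪ flip n '' Set.Icc 1 (n - 1)) ∧
    flip n n ∈ Subgroup.closure ({fullTwist n} ∪ flip n '' Set.Icc 1 (n - 1)) ∧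
    fullTwist n ^ 2 ∈ R' n := by
  set S := Subgroup.closure ({fullTwist n} ∪ flip n '' Set.Icc 1 (n - 1))
  have hd : fullTwist n ∈ S := Subgroup.subset_closure (Or.inl rfl)
  have hflips : flipsDown n (n - 1) 1 ∈ S :=
    Subgroup.closure_mono Set.subset_union_right (flipsDown_mem_closure le_rfl)
  have hrn : flip n n ∈ S := by
    rw [eq_mul_inv_of_mul_eq (flip_self_mul_flipsDown (by omega))]
    exact mul_mem (pow_mem hd 2) (inv_mem hflips)
  refine ⟨le_antisymm ((Subgroup.closure_le _).2 ?_) ?_, hrn, ?_⟩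
  · rintro x (rfl | ⟨i, ⟨hi₁, hin⟩, rfl⟩)
    · exact hd
    · rcases hin.lt_or_eq with hi | rfl
      · exact Subgroup.subset_closure (Or.inr ⟨i, ⟨hi₁, by omega⟩, rfl⟩)
      · exact hrn
  · exact Subgroup.closure_mono (Set.union_subset_union_right _
      (Set.image_mono (Set.Icc_subset_Icc_right (Nat.sub_le n 1))))
  · rw [fullTwist_sq]
    exact flipsDown_mem_closure le_rfl

end Braid
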